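/- Let M be a subset of the closed unit ball of ℓ_∞ and let f ∈ H^∞(B_{c₀}), with f∘ι ∈ H^∞(𝔻_X) where ι(x) = (e_j^*(x))_{j≥1}. Then: (a) there exists r > 0 such that the open disk D(0, r) is contained in Cl_{B_{c₀}}(f, u) for every u ∈ M if and only if there exists r > 0 such that D(0, r) is contained in Cl_{𝔻_X}(f∘ι, u) for every u ∈ M; (b) Cl_{B_{c₀}}(f, u) contains an open disk of positive radius for every u ∈ M if and only if Cl_{𝔻_X}(f∘ι, u) contains an open disk of positive radius for every u ∈ M. (That is, F_M(𝔻_X) = Ψ(F_M(B_{c₀})) and E_M(𝔻_X) = Ψ(E_M(B_{c₀})) under the isometric isomorphism Ψ(f) = f∘ι.) -/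

import Mathlib

/-!
The two cluster sets coincide at every `u`, and both equivalences follow at once. The map `ι`
sends `𝔻_X` into `B_{c₀}` without changing coordinates (a `c₀` sequence whose entries all have
modulus `< 1` has sup norm `< 1`, the supremum being attained), which gives one inclusion.
Conversely, `y ∈ B_{c₀}` is the norm limit of the truncations `ι (∑_{j<N} y_j e_j)`, and
`∑_{j<N} y_j e_j ∈ 𝔻_X`; replacing each term `y_α` of a net by its truncations (a diagonal net,
indexed by the filter `l.bind (fun α ↦ map (α, ·) atTop)`) keeps both the weak-star limit and,
`f` being continuous, the limit of the values of `f`.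
-/

open Filter Topology Metric
open scoped ZeroAtInfty

noncomputable section

structure NormSchauderBasis (X : Type*) [NormedAddCommGroup X] [NormedSpace ℂ X] where
  e : ℕ → X
  coord : ℕ → X →L[ℂ] ℂ
  norm_e : ∀ j, ‖e j‖ = 1
  coord_e : ∀ i j, coord i (e j) = if i = j then 1 else 0
  coord_bdd : ∃ C : ℝ, ∀ j, ‖coord j‖ ≤ C
  expand : ∀ x : X,
    Tendsto (fun n => ∑ j ∈ Finset.range n, coord j x • e j) atTop (nhds x)

def polydisk {X : Type*} [NormedAddCommGroup X] [NormedSpace ℂ X]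
    (B : NormSchauderBasis X) (r : ℕ → ℝ) : Set X :=
  {x | ∀ j, ‖B.coord j x‖ < r j}

def clusterSetC0 (f : C₀(ℕ, ℂ) → ℂ) (u : ℕ → ℂ) : Set ℂ :=
  {lam | ∃ (ι : Type) (l : Filter ι) (x : ι → C₀(ℕ, ℂ)), l.NeBot ∧
    (∀ i, x i ∈ ball (0 : C₀(ℕ, ℂ)) 1) ∧
    (∀ a : lp (fun _ : ℕ => ℂ) 1,
      Tendsto (fun i => ∑' j, a j * x i j) l (nhds (∑' j, a j * u j))) ∧
    Tendsto (fun i => f (x i)) l (nhds lam)}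

def clusterSetDX {X : Type*} [NormedAddCommGroup X] [NormedSpace ℂ X]
    (B : NormSchauderBasis X) (g : X → ℂ) (u : ℕ → ℂ) : Set ℂ :=
  {lam | ∃ (ι : Type) (l : Filter ι) (x : ι → X), l.NeBot ∧
    (∀ i, x i ∈ polydisk B (fun _ => 1)) ∧
    (∀ a : lp (fun _ : ℕ => ℂ) 1,
      Tendsto (fun i => ∑' j, a j * B.coord j (x i)) l (nhds (∑' j, a j * u j))) ∧
    Tendsto (fun i => g (x i)) l (nhds lam)}

theorem Filter.NeBot.bind {α β : Type*} {l : Filter α} {m : α → Filter β} (hl : l.NeBot)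
    (hm : ∀ a, (m a).NeBot) : (l.bind m).NeBot := by
  refine ⟨fun h => ?_⟩
  have hfalse : ∀ᶠ a in l, ∀ᶠ _ in m a, False := eventually_bind.1 (h ▸ eventually_bot)
  obtain ⟨a, ha⟩ := hfalse.exists
  exact (hm a).ne (eventually_false_iff_eq_bot.1 ha)

theorem Filter.Tendsto.uncurry_bind {α β γ : Type*} [TopologicalSpace γ] {l : Filter α}
    {m : Filter β} {F : α → β → γ} {g : α → γ} {c : γ}
    (hF : ∀ a, Tendsto (F a) m (𝓝 (g a))) (hg : Tendsto g l (𝓝 c)) :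
    Tendsto (Function.uncurry F) (l.bind fun a => map (Prod.mk a) m) (𝓝 c) := by
  intro U hU
  exact eventually_bind.2 <| (hg.eventually (eventually_eventually_nhds.2 hU)).mono
    fun a ha => eventually_map.2 (hF a ha)

namespace ZeroAtInftyContinuousMap

variable {E : Type*} [NormedAddCommGroup E]

theorem norm_apply_le (y : C₀(ℕ, E)) (j : ℕ) : ‖y j‖ ≤ ‖y‖ :=
  norm_toBCF_eq_norm (f := y) ▸ y.toBCF.norm_coe_le_norm j

theorem norm_le_of_forall_le {y : C₀(ℕ, E)} {C : ℝ} (hC : 0 ≤ C) (h : ∀ j, ‖y j‖ ≤ C) :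
    ‖y‖ ≤ C :=
  norm_toBCF_eq_norm (f := y) ▸ (BoundedContinuousFunction.norm_le hC).2 h

theorem tendsto_norm_apply_atTop (y : C₀(ℕ, E)) : Tendsto (fun j => ‖y j‖) atTop (𝓝 0) :=
  tendsto_zero_iff_norm_tendsto_zero.1 (cocompact_eq_atTop (α := ℕ) ▸ y.zero_at_infty')

theorem norm_lt_of_forall_lt {y : C₀(ℕ, E)} {r : ℝ} (hr : 0 < r) (h : ∀ j, ‖y j‖ < r) :
    ‖y‖ < r := by
  -- `max ‖y j‖ (r / 2)` is eventually constant, so it attains its supremum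
  have hcont : Continuous fun j => max ‖y j‖ (r / 2) := continuous_of_discreteTopology
  obtain ⟨m, hm⟩ := hcont.exists_forall_ge' 0 <| by
    rw [cocompact_eq_atTop]
    filter_upwards [y.tendsto_norm_apply_atTop.eventually (gt_mem_nhds (half_pos hr))] with j hj
    exact max_le (hj.le.trans (le_max_right _ _)) (le_max_right _ _)
  calc ‖y‖ ≤ max ‖y m‖ (r / 2) :=
        norm_le_of_forall_le (by positivity) fun j => (le_max_left _ _).trans (hm j)
    _ < r := max_lt (h m) (half_lt_self hr)

theorem tendsto_of_apply_eq_ite (y : C₀(ℕ, E)) {z : ℕ → C₀(ℕ, E)}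
    (hz : ∀ N j, z N j = if j < N then y j else 0) : Tendsto z atTop (𝓝 y) := by
  rw [Metric.tendsto_atTop]
  intro ε hε
  obtain ⟨N₀, hN₀⟩ := eventually_atTop.1
    (y.tendsto_norm_apply_atTop.eventually (gt_mem_nhds (half_pos hε)))
  refine ⟨N₀, fun N hN => ?_⟩
  rw [dist_eq_norm]
  refine (norm_le_of_forall_le (half_pos hε).le fun j => ?_).trans_lt (half_lt_self hε)
  rw [sub_apply, hz]
  split_ifs with hj
  · simpa using (half_pos hε).le
  · simpa using (hN₀ j (by omega)).le

end ZeroAtInftyContinuousMap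

namespace NormSchauderBasis

variable {X : Type*} [NormedAddCommGroup X] [NormedSpace ℂ X] (B : NormSchauderBasis X)

def partialSum (y : ℕ → ℂ) (N : ℕ) : X := ∑ j ∈ Finset.range N, y j • B.e j

theorem coord_partialSum (y : ℕ → ℂ) (N k : ℕ) :
    B.coord k (B.partialSum y N) = if k < N then y k else 0 := by
  simp [partialSum, B.coord_e]

end NormSchauderBasis

theorem lp.summable_mul_of_norm_le {α 𝕜 : Type*} [NormedRing 𝕜] [CompleteSpace 𝕜]
    (a : lp (fun _ : α => 𝕜) 1) {y : α → 𝕜} {C : ℝ} (hy : ∀ j, ‖y j‖ ≤ C) :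
    Summable fun j => a j * y j := by
  have ha : Summable fun j => ‖a j‖ := by
    simpa using (lp.memℓp a).summable (by norm_num : 0 < (1 : ENNReal).toReal)
  refine Summable.of_norm_bounded (ha.mul_right C) fun j => ?_
  exact (norm_mul_le _ _).trans (mul_le_mul_of_nonneg_left (hy j) (norm_nonneg _))

section ClusterSets

variable {X : Type*} [NormedAddCommGroup X] [NormedSpace ℂ X] (B : NormSchauderBasis X)
  {ι : X → C₀(ℕ, ℂ)}

theorem clusterSetDX_comp_subset_clusterSetC0 (hι : ∀ x j, ι x j = B.coord j x)
    (f : C₀(ℕ, ℂ) → ℂ) (u : ℕ → ℂ) :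
    clusterSetDX B (f ∘ ι) u ⊆ clusterSetC0 f u := by
  rintro lam ⟨κ, l, x, hl, hx, hweak, hlim⟩
  refine ⟨κ, l, ι ∘ x, hl, fun i => ?_, ?_, hlim⟩
  · exact mem_ball_zero_iff.2 <|
      ZeroAtInftyContinuousMap.norm_lt_of_forall_lt one_pos fun j => hι (x i) j ▸ hx i j
  · simpa only [Function.comp_apply, hι] using hweak

theorem clusterSetC0_subset_clusterSetDX_comp (hι : ∀ x j, ι x j = B.coord j x)
    {f : C₀(ℕ, ℂ) → ℂ} (hf : ContinuousOn f (ball 0 1)) (u : ℕ → ℂ) :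
    clusterSetC0 f u ⊆ clusterSetDX B (f ∘ ι) u := by
  rintro lam ⟨κ, l, x, hl, hx, hweak, hlim⟩
  have hx_le : ∀ i j, ‖x i j‖ ≤ 1 := fun i j =>
    ((x i).norm_apply_le j).trans (mem_ball_zero_iff.1 (hx i)).le
  have hι_partialSum : ∀ i, Tendsto (fun N => ι (B.partialSum (x i) N)) atTop (𝓝 (x i)) :=
    fun i => (x i).tendsto_of_apply_eq_ite fun N j => by rw [hι, B.coord_partialSum]
  refine ⟨κ × ℕ, l.bind fun i => map (Prod.mk i) atTop, fun p => B.partialSum (x p.1) p.2,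
    hl.bind fun _ => inferInstance, ?_, fun a => ?_, ?_⟩
  · rintro ⟨i, N⟩ k
    rw [B.coord_partialSum]
    split_ifs
    · exact ((x i).norm_apply_le k).trans_lt (mem_ball_zero_iff.1 (hx i))
    · simp
  · refine Tendsto.uncurry_bind (F := fun i N => ∑' j, a j * B.coord j (B.partialSum (x i) N))
      (fun i => ?_) (hweak a)
    have hpartial : ∀ N, ∑' j, a j * B.coord j (B.partialSum (x i) N)
        = ∑ j ∈ Finset.range N, a j * x i j := fun N => by
      rw [tsum_eq_sum (s := Finset.range N) fun j hj => by simp_all [B.coord_partialSum]]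
      exact Finset.sum_congr rfl fun j hj => by simp_all [B.coord_partialSum]
    simpa only [hpartial] using (lp.summable_mul_of_norm_le a (hx_le i)).hasSum.tendsto_sum_nat
  · refine Tendsto.uncurry_bind (F := fun i N => f (ι (B.partialSum (x i) N))) (fun i => ?_) hlim
    exact (hf.continuousAt (isOpen_ball.mem_nhds (hx i))).tendsto.comp (hι_partialSum i)

end ClusterSets

theorem clusterSetC0_eq_clusterSetDX_comp {X : Type*} [NormedAddCommGroup X] [NormedSpace ℂ X]
    (B : NormSchauderBasis X) {ι : X → C₀(ℕ, ℂ)} (hι : ∀ x j, ι x j = B.coord j x)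
    {f : C₀(ℕ, ℂ) → ℂ} (hf : ContinuousOn f (ball 0 1)) (u : ℕ → ℂ) :
    clusterSetC0 f u = clusterSetDX B (f ∘ ι) u :=
  (clusterSetC0_subset_clusterSetDX_comp B hι hf u).antisymm
    (clusterSetDX_comp_subset_clusterSetC0 B hι f u)

theorem stmt15_general {X : Type*} [NormedAddCommGroup X] [NormedSpace ℂ X]
    (B : NormSchauderBasis X) (ι : X → C₀(ℕ, ℂ)) (hι : ∀ (x : X) (j : ℕ), ι x j = B.coord j x)
    (M : Set (ℕ → ℂ))
    (f : C₀(ℕ, ℂ) → ℂ) (hf : DifferentiableOn ℂ f (ball 0 1)) :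
    ((∃ r : ℝ, 0 < r ∧ ∀ u ∈ M, ball (0 : ℂ) r ⊆ clusterSetC0 f u) ↔
      (∃ r : ℝ, 0 < r ∧ ∀ u ∈ M, ball (0 : ℂ) r ⊆ clusterSetDX B (f ∘ ι) u)) ∧
    ((∀ u ∈ M, ∃ (c : ℂ) (r : ℝ), 0 < r ∧ ball c r ⊆ clusterSetC0 f u) ↔
      (∀ u ∈ M, ∃ (c : ℂ) (r : ℝ), 0 < r ∧ ball c r ⊆ clusterSetDX B (f ∘ ι) u)) := by
  simp only [clusterSetC0_eq_clusterSetDX_comp B hι hf.continuousOn, iff_self, and_self]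

/-- for `M` a subset of the closed unit ball of `ℓ_∞` and `f ∈ H^∞(B_{c₀})`
with `f ∘ ι ∈ H^∞(𝔻_X)`:
(a) a common disk `D(0,r)` lies in all `Cl_{B_{c₀}}(f,u)`, `u ∈ M`, iff a common disk
`D(0,r)` lies in all `Cl_{𝔻_X}(f∘ι, u)`, `u ∈ M`;
(b) each `Cl_{B_{c₀}}(f,u)`, `u ∈ M`, contains a disk iff each `Cl_{𝔻_X}(f∘ι, u)` does. -/
theorem stmt15 {X : Type*} [NormedAddCommGroup X] [NormedSpace ℂ X] [CompleteSpace X]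
    (B : NormSchauderBasis X) (ι : X → C₀(ℕ, ℂ)) (hι : ∀ (x : X) (j : ℕ), ι x j = B.coord j x)
    (M : Set (ℕ → ℂ)) (hM : ∀ u ∈ M, ∀ j, ‖u j‖ ≤ 1)
    (f : C₀(ℕ, ℂ) → ℂ) (hf : DifferentiableOn ℂ f (ball 0 1))
    (hfb : ∃ C : ℝ, ∀ z ∈ ball (0 : C₀(ℕ, ℂ)) 1, ‖f z‖ ≤ C)
    (hfι : DifferentiableOn ℂ (f ∘ ι) (polydisk B (fun _ => 1)))
    (hfιb : ∃ C : ℝ, ∀ x ∈ polydisk B (fun _ => 1), ‖(f ∘ ι) x‖ ≤ C) :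
    ((∃ r : ℝ, 0 < r ∧ ∀ u ∈ M, ball (0 : ℂ) r ⊆ clusterSetC0 f u) ↔
      (∃ r : ℝ, 0 < r ∧ ∀ u ∈ M, ball (0 : ℂ) r ⊆ clusterSetDX B (f ∘ ι) u)) ∧
    ((∀ u ∈ M, ∃ (c : ℂ) (r : ℝ), 0 < r ∧ ball c r ⊆ clusterSetC0 f u) ↔
      (∀ u ∈ M, ∃ (c : ℂ) (r : ℝ), 0 < r ∧ ball c r ⊆ clusterSetDX B (f ∘ ι) u)) :=
  stmt15_general B ι hι M f hf
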